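/- arXiv:1804.09255 — 2 statements merged into one kernel-verified Lean document; each statement's English description precedes it below -/
import Mathlib

section
/- Let 0<q<1 and r>0. Suppose σ is a nonzero nonnegative measure on Ω and G a positive kernel such that the weighted norm inequality ‖G(f dσ)‖_{L^r(σ)} ≤ C ‖f‖_{L^{r/q}(σ)} holds for all f ∈ L^{r/q}(σ), and suppose w ∈ L^r(σ) is a given nonnegative function with w > 0. Define u_0 = w and u_{j+1} = G(u_j^q dσ) + w. Then the sequence (u_j) is nondecreasing, each u_j ∈ L^r(σ), and ‖u_j‖_{L^r(σ)} ≤ (C·c)^{1/(1−q)} + (c/(1−q)) ‖w‖_{L^r(σ)} for all j, where c = max(1, 2^{(1−r)/r}). Consequently the pointwise limit u = lim u_j is a positive solution in L^r(σ) of u = G(u^q dσ) + w. -/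
/-!
The iterates increase by induction, since `t ↦ t ^ q` is monotone. Writing `N j` for the
`L^r(σ)` norm of `u j` and `W` for that of `w`, the quasi-triangle inequality in `L^r` and the
weighted norm inequality applied to `u j ^ q ∈ L^(r/q)` give `N (j + 1) ≤ c (C N j ^ q + W)`.
Young's inequality `K t ^ q ≤ (1 - q) K ^ (1/(1-q)) + q t` shows that
`B = (C c) ^ (1/(1-q)) + c W / (1 - q)` satisfies `c C B ^ q + c W ≤ B`, so `N j ≤ B` for all `j`.
Monotone convergence then passes to the limit in the norm bound and in the recursion.
-/

open MeasureTheory ENNReal Set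

/-- Potential of a measure with respect to a kernel. -/
noncomputable def pot {Ω : Type*} [MeasurableSpace Ω] (G : Ω → Ω → ℝ≥0∞)
    (ν : Measure Ω) (x : Ω) : ℝ≥0∞ :=
  ∫⁻ y, G x y ∂ν

theorem ENNReal.iSup_rpow {ι : Sort*} (f : ι → ℝ≥0∞) {s : ℝ} (hs : 0 < s) :
    (⨆ i, f i) ^ s = ⨆ i, f i ^ s :=
  map_iSup (ENNReal.orderIsoRpow s hs) f

theorem ENNReal.mul_rpow_add_le_of_young {q : ℝ} (hq0 : 0 < q) (hq1 : q < 1) (K a W : ℝ≥0∞) :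
    K * (K ^ (1 / (1 - q)) + a / ENNReal.ofReal (1 - q) * W) ^ q + a * W ≤
      K ^ (1 / (1 - q)) + a / ENNReal.ofReal (1 - q) * W := by
  set A := K ^ (1 / (1 - q))
  set e := ENNReal.ofReal (1 - q)
  set B := A + a / e * W
  have he0 : e ≠ 0 := (ENNReal.ofReal_pos.2 (sub_pos.2 hq1)).ne'
  have hek : e + ENNReal.ofReal q = 1 := by
    rw [← ENNReal.ofReal_add (sub_pos.2 hq1).le hq0.le, sub_add_cancel, ENNReal.ofReal_one]
  have young : K * B ^ q ≤ A * e + B * ENNReal.ofReal q := by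
    have h := ENNReal.young_inequality K (B ^ q) (Real.HolderConjugate.one_sub_inv_inv hq0 hq1)
    rwa [← ENNReal.rpow_mul, mul_inv_cancel₀ hq0.ne', ENNReal.rpow_one,
      ENNReal.ofReal_inv_of_pos (sub_pos.2 hq1), ENNReal.ofReal_inv_of_pos hq0, div_eq_mul_inv,
      div_eq_mul_inv, inv_inv, inv_inv, ← one_div] at h
  calc K * B ^ q + a * W ≤ A * e + B * ENNReal.ofReal q + a * W := by gcongr
    _ = A * (e + ENNReal.ofReal q) + (a / e * ENNReal.ofReal q + a / e * e) * W := by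
        rw [ENNReal.div_mul_cancel he0 ENNReal.ofReal_ne_top]; ring
    _ = B := by rw [← mul_add, add_comm (ENNReal.ofReal q), hek, mul_one, mul_one]

section

variable {Ω : Type*} [MeasurableSpace Ω] {σ : Measure Ω} {r : ℝ}

theorem ae_ne_top_of_lintegral_rpow_lt_top {f : Ω → ℝ≥0∞} (hf : Measurable f) (hr : 0 < r)
    (h : ∫⁻ x, f x ^ r ∂σ < ⊤) : ∀ᵐ x ∂σ, f x ≠ ∞ := by
  filter_upwards [ae_lt_top (hf.pow_const r) h.ne] with x hx
  exact ((ENNReal.rpow_lt_top_iff_of_pos hr).1 hx).ne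

theorem lintegral_iSup_rpow {f : ℕ → Ω → ℝ≥0∞} (hf : ∀ j, Measurable (f j)) (hmono : Monotone f)
    (hr : 0 < r) : ∫⁻ x, (⨆ j, f j x) ^ r ∂σ = ⨆ j, ∫⁻ x, f j x ^ r ∂σ := by
  simp_rw [ENNReal.iSup_rpow _ hr]
  exact lintegral_iSup (fun j => (hf j).pow_const r)
    (fun j k hjk x => ENNReal.rpow_le_rpow (hmono hjk x) hr.le)

theorem lintegral_mul_iSup_of_monotone (φ : Ω → ℝ≥0∞) {h : ℕ → Ω → ℝ≥0∞}
    (hm : ∀ j, Measurable (h j)) (hmono : Monotone h)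
    (hfin : ∀ᵐ y ∂σ, ⨆ j, h j y ≠ ∞) :
    ∫⁻ y, φ y * ⨆ j, h j y ∂σ = ⨆ j, ∫⁻ y, φ y * h j y ∂σ := by
  refine le_antisymm ?_
    (iSup_le fun j => lintegral_mono fun y => by gcongr; exact le_iSup (h · y) j)
  set H : Ω → ℝ≥0∞ := fun y => ⨆ j, h j y
  -- `φ` need not be measurable: pass to a measurable minorant `g` of `φ * H` with the same
  -- integral, and approximate `g` by the measurable functions `g * (h j / H)`.
  obtain ⟨g, hgm, hg_le, hg_eq⟩ := exists_measurable_le_lintegral_eq σ (fun y => φ y * H y)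
  have hg_iSup : ∀ᵐ y ∂σ, g y = ⨆ j, g y * (h j y / H y) := by
    filter_upwards [hfin] with y hy
    rw [← ENNReal.mul_iSup, ← ENNReal.iSup_div]
    rcases eq_or_ne (H y) 0 with hH | hH
    · have : g y = 0 := le_antisymm ((hg_le y).trans_eq (by simp [hH])) zero_le
      simp [this]
    · rw [ENNReal.div_self hH hy, mul_one]
  rw [hg_eq, lintegral_congr_ae hg_iSup,
    lintegral_iSup (f := fun j y => g y * (h j y / H y))
      (fun j => hgm.mul ((hm j).div (Measurable.iSup hm)))
      (fun j k hjk y => by dsimp only; gcongr; exact hmono hjk y)]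
  refine iSup_mono fun j => lintegral_mono fun y => ?_
  calc g y * (h j y / H y) ≤ φ y * (H y * (h j y / H y)) := by
        rw [← mul_assoc]; gcongr; exact hg_le y
    _ ≤ φ y * h j y := by gcongr; exact ENNReal.mul_div_le

theorem lintegral_Lp_add_le_max {f g : Ω → ℝ≥0∞} (hf : AEMeasurable f σ) (hg : AEMeasurable g σ)
    (hr : 0 < r) :
    (∫⁻ x, (f x + g x) ^ r ∂σ) ^ (1 / r) ≤
      ENNReal.ofReal (max 1 (2 ^ ((1 - r) / r))) *
        ((∫⁻ x, f x ^ r ∂σ) ^ (1 / r) + (∫⁻ x, g x ^ r ∂σ) ^ (1 / r)) := by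
  rcases le_or_gt 1 r with h1 | h1
  · refine (ENNReal.lintegral_Lp_add_le hf hg h1).trans (le_mul_of_one_le_left' ?_)
    exact ENNReal.one_le_ofReal.2 (le_max_left _ _)
  · refine (ENNReal.lintegral_Lp_add_le_of_le_one hf hr.le h1.le).trans ?_
    gcongr
    rw [← ENNReal.ofReal_ofNat 2, ENNReal.ofReal_rpow_of_pos two_pos]
    refine ENNReal.ofReal_le_ofReal (le_of_eq_of_le ?_ (le_max_right _ _))
    congr 1
    field_simp

variable {G : Ω → Ω → ℝ≥0∞} {q : ℝ} {C : ℝ≥0∞} {w : Ω → ℝ≥0∞} {u : ℕ → Ω → ℝ≥0∞}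

theorem lintegral_kernel_rpow_le (hq0 : 0 < q)
    (hnorm : ∀ f : Ω → ℝ≥0∞, Measurable f →
      (∫⁻ x, (∫⁻ y, G x y * f y ∂σ) ^ r ∂σ) ^ (1 / r) ≤
        C * (∫⁻ x, f x ^ (r / q) ∂σ) ^ (q / r))
    {v : Ω → ℝ≥0∞} (hv : Measurable v) :
    (∫⁻ x, (∫⁻ y, G x y * v y ^ q ∂σ) ^ r ∂σ) ^ (1 / r) ≤
      C * ((∫⁻ x, v x ^ r ∂σ) ^ (1 / r)) ^ q := by
  have h := hnorm (fun y => v y ^ q) (hv.pow_const q)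
  simp only [← ENNReal.rpow_mul, mul_div_cancel₀ r hq0.ne'] at h
  rwa [← ENNReal.rpow_mul, one_div_mul_eq_div]

variable (hurec : ∀ j x, u (j + 1) x = (∫⁻ y, G x y * u j y ^ q ∂σ) + w x)
include hurec

theorem iterate_le_succ (hu0 : ∀ x, u 0 x = w x) (hq0 : 0 < q) : ∀ j x, u j x ≤ u (j + 1) x
  | 0, x => by rw [hu0, hurec]; exact le_add_self
  | j + 1, x => by
    rw [hurec, hurec]
    gcongr with y
    exact iterate_le_succ hu0 hq0 j y

theorem aemeasurable_kernel_iterate (hw : Measurable w) (hwfin : ∀ᵐ x ∂σ, w x ≠ ∞)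
    (humeas : ∀ j, Measurable (u j)) (j : ℕ) :
    AEMeasurable (fun x => ∫⁻ y, G x y * u j y ^ q ∂σ) σ :=
  ((humeas (j + 1)).sub hw).aemeasurable.congr <| by
    filter_upwards [hwfin] with x hx
    rw [Pi.sub_apply, hurec, ENNReal.add_sub_cancel_right hx]

theorem iterate_norm_le (hq0 : 0 < q) (hq1 : q < 1) (hr : 0 < r)
    (hnorm : ∀ f : Ω → ℝ≥0∞, Measurable f →
      (∫⁻ x, (∫⁻ y, G x y * f y ∂σ) ^ r ∂σ) ^ (1 / r) ≤
        C * (∫⁻ x, f x ^ (r / q) ∂σ) ^ (q / r))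
    (hw : Measurable w) (hwfin : ∀ᵐ x ∂σ, w x ≠ ∞) (humeas : ∀ j, Measurable (u j))
    (hu0 : ∀ x, u 0 x = w x) (j : ℕ) :
    (∫⁻ x, u j x ^ r ∂σ) ^ (1 / r) ≤
      (C * ENNReal.ofReal (max 1 (2 ^ ((1 - r) / r)))) ^ (1 / (1 - q)) +
        ENNReal.ofReal (max 1 (2 ^ ((1 - r) / r))) / ENNReal.ofReal (1 - q) *
          (∫⁻ x, w x ^ r ∂σ) ^ (1 / r) := by
  set c := ENNReal.ofReal (max 1 (2 ^ ((1 - r) / r)))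
  set e := ENNReal.ofReal (1 - q)
  set W := (∫⁻ x, w x ^ r ∂σ) ^ (1 / r)
  set B := (C * c) ^ (1 / (1 - q)) + c / e * W
  induction j with
  | zero =>
    have hce : 1 ≤ c / e := by
      rw [ENNReal.le_div_iff_mul_le (.inl (ENNReal.ofReal_pos.2 (sub_pos.2 hq1)).ne')
        (.inl ENNReal.ofReal_ne_top), one_mul]
      exact (ENNReal.ofReal_le_one.2 (by linarith)).trans
        (ENNReal.one_le_ofReal.2 (le_max_left _ _))
    simp only [hu0]
    exact (le_mul_of_one_le_left' hce).trans le_add_self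
  | succ j ih =>
    calc (∫⁻ x, u (j + 1) x ^ r ∂σ) ^ (1 / r)
        ≤ c * ((∫⁻ x, (∫⁻ y, G x y * u j y ^ q ∂σ) ^ r ∂σ) ^ (1 / r) + W) := by
          simp only [hurec]
          exact lintegral_Lp_add_le_max (aemeasurable_kernel_iterate hurec hw hwfin humeas j)
            hw.aemeasurable hr
      _ ≤ c * (C * B ^ q + W) := by
          gcongr
          exact (lintegral_kernel_rpow_le hq0 hnorm (humeas j)).trans (by gcongr)
      _ = C * c * B ^ q + c * W := by ring
      _ ≤ B := ENNReal.mul_rpow_add_le_of_young hq0 hq1 _ _ _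

theorem iSup_iterate_eq (hq0 : 0 < q) (hmono : ∀ j x, u j x ≤ u (j + 1) x)
    (humeas : ∀ j, Measurable (u j)) (hfin : ∀ᵐ y ∂σ, ⨆ j, u j y ≠ ∞) (x : Ω) :
    ⨆ j, u j x = (∫⁻ y, G x y * (⨆ j, u j y) ^ q ∂σ) + w x := by
  have hmono' : Monotone u := monotone_nat_of_le_succ fun j y => hmono j y
  have hfin_q : ∀ᵐ y ∂σ, ⨆ j, u j y ^ q ≠ ∞ := by
    filter_upwards [hfin] with y hy
    rw [← ENNReal.iSup_rpow _ hq0]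
    exact ENNReal.rpow_ne_top_of_nonneg hq0.le hy
  calc ⨆ j, u j x = ⨆ j, u (j + 1) x :=
        (Monotone.iSup_nat_add (fun _ _ hjk => hmono' hjk x) 1).symm
    _ = (⨆ j, ∫⁻ y, G x y * u j y ^ q ∂σ) + w x := by simp only [hurec, ENNReal.iSup_add]
    _ = (∫⁻ y, G x y * (⨆ j, u j y) ^ q ∂σ) + w x := by
        simp_rw [ENNReal.iSup_rpow _ hq0]
        rw [lintegral_mul_iSup_of_monotone _ (fun j => (humeas j).pow_const q)
          (fun j k hjk y => ENNReal.rpow_le_rpow (hmono' hjk y) hq0.le) hfin_q]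

end

theorem iteration_scheme_inhomogeneous_general
    {Ω : Type*} [MeasurableSpace Ω]
    (G : Ω → Ω → ℝ≥0∞)
    (σ : Measure Ω)
    (q r : ℝ) (hq0 : 0 < q) (hq1 : q < 1) (hr : 0 < r)
    (C : ℝ≥0∞) (hC : C ≠ ⊤)
    (hnorm : ∀ f : Ω → ℝ≥0∞, Measurable f →
      (∫⁻ x, (∫⁻ y, G x y * f y ∂σ) ^ r ∂σ) ^ (1 / r) ≤
        C * (∫⁻ x, f x ^ (r / q) ∂σ) ^ (q / r))
    (w : Ω → ℝ≥0∞) (hw : Measurable w) (hwpos : ∀ x, 0 < w x)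
    (hwLr : ∫⁻ x, w x ^ r ∂σ < ⊤)
    (u : ℕ → Ω → ℝ≥0∞) (humeas : ∀ j, Measurable (u j))
    (hu0 : ∀ x, u 0 x = w x)
    (hurec : ∀ j x, u (j + 1) x = (∫⁻ y, G x y * u j y ^ q ∂σ) + w x) :
    (∀ j x, u j x ≤ u (j + 1) x) ∧
    (∀ j, ∫⁻ x, u j x ^ r ∂σ < ⊤) ∧
    (∀ j, (∫⁻ x, u j x ^ r ∂σ) ^ (1 / r) ≤
      (C * ENNReal.ofReal (max 1 (2 ^ ((1 - r) / r)))) ^ (1 / (1 - q)) +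
        ENNReal.ofReal (max 1 (2 ^ ((1 - r) / r))) / ENNReal.ofReal (1 - q) *
          (∫⁻ x, w x ^ r ∂σ) ^ (1 / r)) ∧
    (∀ x, 0 < ⨆ j, u j x) ∧
    (∀ x, (⨆ j, u j x) = (∫⁻ y, G x y * (⨆ j, u j y) ^ q ∂σ) + w x) ∧
    (∫⁻ x, (⨆ j, u j x) ^ r ∂σ < ⊤) := by
  have hr' : 0 < 1 / r := one_div_pos.2 hr
  have hmono := iterate_le_succ hurec hu0 hq0
  have hwfin := ae_ne_top_of_lintegral_rpow_lt_top hw hr hwLr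
  have hbound := iterate_norm_le hurec hq0 hq1 hr hnorm hw hwfin humeas hu0
  have hB_lt_top : (C * ENNReal.ofReal (max 1 (2 ^ ((1 - r) / r)))) ^ (1 / (1 - q)) +
      ENNReal.ofReal (max 1 (2 ^ ((1 - r) / r))) / ENNReal.ofReal (1 - q) *
        (∫⁻ x, w x ^ r ∂σ) ^ (1 / r) < ⊤ := by
    have he0 : ENNReal.ofReal (1 - q) ≠ 0 := (ENNReal.ofReal_pos.2 (sub_pos.2 hq1)).ne'
    have hW := hwLr.ne
    finiteness
  have hlim_lt_top : ∫⁻ x, (⨆ j, u j x) ^ r ∂σ < ⊤ := by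
    refine (ENNReal.rpow_lt_top_iff_of_pos hr').1 ?_
    rw [lintegral_iSup_rpow humeas (monotone_nat_of_le_succ fun j y => hmono j y) hr,
      ENNReal.iSup_rpow _ hr']
    exact (iSup_le hbound).trans_lt hB_lt_top
  have hlim_fin := ae_ne_top_of_lintegral_rpow_lt_top (Measurable.iSup humeas) hr hlim_lt_top
  refine ⟨hmono, fun j => (ENNReal.rpow_lt_top_iff_of_pos hr').1 ((hbound j).trans_lt hB_lt_top),
    hbound, fun x => ?_, iSup_iterate_eq hurec hq0 hmono humeas hlim_fin, hlim_lt_top⟩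
  exact (hwpos x).trans_le ((hu0 x).symm.trans_le (le_iSup (u · x) 0))

theorem iteration_scheme_inhomogeneous
    {Ω : Type*} [MeasurableSpace Ω]
    (G : Ω → Ω → ℝ≥0∞) (hGpos : ∀ x y, 0 < G x y)
    (σ : Measure Ω) (hσ : σ ≠ 0)
    (q r : ℝ) (hq0 : 0 < q) (hq1 : q < 1) (hr : 0 < r)
    (C : ℝ≥0∞) (hC0 : 0 < C) (hC : C ≠ ⊤)
    (hnorm : ∀ f : Ω → ℝ≥0∞, Measurable f →
      (∫⁻ x, (∫⁻ y, G x y * f y ∂σ) ^ r ∂σ) ^ (1 / r) ≤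
        C * (∫⁻ x, f x ^ (r / q) ∂σ) ^ (q / r))
    (w : Ω → ℝ≥0∞) (hw : Measurable w) (hwpos : ∀ x, 0 < w x)
    (hwLr : ∫⁻ x, w x ^ r ∂σ < ⊤)
    (u : ℕ → Ω → ℝ≥0∞) (humeas : ∀ j, Measurable (u j))
    (hu0 : ∀ x, u 0 x = w x)
    (hurec : ∀ j x, u (j + 1) x = (∫⁻ y, G x y * u j y ^ q ∂σ) + w x) :
    (∀ j x, u j x ≤ u (j + 1) x) ∧
    (∀ j, ∫⁻ x, u j x ^ r ∂σ < ⊤) ∧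
    (∀ j, (∫⁻ x, u j x ^ r ∂σ) ^ (1 / r) ≤
      (C * ENNReal.ofReal (max 1 (2 ^ ((1 - r) / r)))) ^ (1 / (1 - q)) +
        ENNReal.ofReal (max 1 (2 ^ ((1 - r) / r))) / ENNReal.ofReal (1 - q) *
          (∫⁻ x, w x ^ r ∂σ) ^ (1 / r)) ∧
    (∀ x, 0 < ⨆ j, u j x) ∧
    (∀ x, (⨆ j, u j x) = (∫⁻ y, G x y * (⨆ j, u j y) ^ q ∂σ) + w x) ∧
    (∫⁻ x, (⨆ j, u j x) ^ r ∂σ < ⊤) :=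
  iteration_scheme_inhomogeneous_general G σ q r hq0 hq1 hr C hC hnorm w hw hwpos hwLr u humeas hu0
    hurec
end

section
/- Let n ≥ 3 and 0 < γ < 1, and set p = n(1+γ)/(n+γ−1). Suppose u is a positive function on an open set Ω ⊆ ℝ^n with u ∈ W^{1,p}_loc(Ω), satisfying the Sobolev inequality ‖v‖_{L^{(1−γ)p/(2−p)}(Ω')} ≤ c‖∇v‖_{L^p(Ω')} on relatively compact open subsets Ω' (for truncations v = min(u,k)), and suppose E := ∫_Ω |∇u|^2 u^{γ−1} dx < ∞. Then |∇u| ∈ L^p(Ω) with ‖∇u‖_{L^p(Ω)}^{p(1+γ)/2} ≤ c' E^{p/2} for a constant c' depending only on n, γ, c. -/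
/-!
With `q = (1 - γ) p / (2 - p)`, Hölder's inequality with exponents `2 / p` and `2 / (2 - p)`
splits `|∇u|^p = (|∇u|² u^(γ-1))^(p/2) · u^((1-γ) p/2)` and gives
`∫ |∇u|^p ≤ E^(p/2) (∫ u^q)^((2-p)/2)`, while the Sobolev inequality bounds the last factor by
`c^((1-γ) p/2) (∫ |∇u|^p)^((1-γ)/2)`. On an open set with compact closure in `Ω` the function `u`
is bounded, so `min u k = u` for large `k` and every integral is finite; the power `(1-γ)/2 < 1`
can then be absorbed, leaving `(∫ |∇u|^p)^((1+γ)/2) ≤ c^((1-γ) p/2) E^(p/2)`. Exhausting `Ω` by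
such sets and using monotone convergence gives the same bound on `Ω`.
-/

open MeasureTheory ENNReal Set

theorem ENNReal.rpow_one_sub_le_of_le_mul_rpow {A K : ℝ≥0∞} {θ : ℝ} (hθ : θ < 1)
    (hA : A ≠ ⊤) (h : A ≤ K * A ^ θ) : A ^ (1 - θ) ≤ K := by
  rcases eq_or_ne A 0 with rfl | hA0
  · simp [ENNReal.zero_rpow_of_pos (sub_pos.2 hθ)]
  have hθ0 : A ^ θ ≠ 0 := (ENNReal.rpow_pos (pos_iff_ne_zero.2 hA0) hA).ne'
  have hθtop : A ^ θ ≠ ⊤ := ENNReal.rpow_ne_top_of_ne_zero hA0 hA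
  rwa [← ENNReal.mul_le_mul_iff_left hθ0 hθtop, ← ENNReal.rpow_add _ _ hA0 hA, sub_add_cancel,
    ENNReal.rpow_one]

section WeightedEnergy

variable {α : Type*} [MeasurableSpace α] {μ : Measure α} {a b : α → ℝ≥0∞} {p s : ℝ}

theorem lintegral_rpow_le_weighted_energy_mul (hp0 : 0 < p) (hp2 : p < 2)
    (ha : AEMeasurable a μ) (hb : AEMeasurable b μ) (hb0 : ∀ᵐ x ∂μ, b x ≠ 0)
    (hbtop : ∀ᵐ x ∂μ, b x ≠ ⊤) :
    ∫⁻ x, a x ^ p ∂μ ≤ (∫⁻ x, a x ^ (2 : ℝ) * b x ^ (-s) ∂μ) ^ (p / 2) *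
      (∫⁻ x, b x ^ (s * p / (2 - p)) ∂μ) ^ ((2 - p) / 2) := by
  have hconj : (2 / p).HolderConjugate (2 / (2 - p)) := by
    rw [Real.holderConjugate_iff, inv_div, inv_div, ← add_div, add_sub_cancel, div_self two_ne_zero]
    exact ⟨(one_lt_div hp0).2 hp2, rfl⟩
  have hsplit : ∀ᵐ x ∂μ, a x ^ p =
      (a x ^ (2 : ℝ) * b x ^ (-s)) ^ (p / 2) * b x ^ (s * p / 2) := by
    filter_upwards [hb0, hbtop] with x hx0 hxtop
    rw [ENNReal.mul_rpow_of_nonneg _ _ (by positivity), ← ENNReal.rpow_mul, ← ENNReal.rpow_mul,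
      mul_assoc, ← ENNReal.rpow_add _ _ hx0 hxtop, show -s * (p / 2) + s * p / 2 = 0 by ring,
      ENNReal.rpow_zero, mul_one, mul_div_cancel₀ p two_ne_zero]
  have hHolder := ENNReal.lintegral_mul_le_Lp_mul_Lq μ hconj
    (f := fun x => (a x ^ (2 : ℝ) * b x ^ (-s)) ^ (p / 2)) (g := fun x => b x ^ (s * p / 2))
    (by fun_prop) (by fun_prop)
  have hf : ∀ x, ((a x ^ (2 : ℝ) * b x ^ (-s)) ^ (p / 2)) ^ (2 / p) = a x ^ (2 : ℝ) * b x ^ (-s) :=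
    fun x => by
      rw [← ENNReal.rpow_mul, div_mul_div_cancel₀ two_ne_zero, div_self hp0.ne', ENNReal.rpow_one]
  have hg : ∀ x, (b x ^ (s * p / 2)) ^ (2 / (2 - p)) = b x ^ (s * p / (2 - p)) :=
    fun x => by rw [← ENNReal.rpow_mul]; congr 1; field_simp
  simp only [Pi.mul_apply, hf, hg, one_div_div] at hHolder
  rwa [lintegral_congr_ae hsplit]

theorem rpow_lintegral_rpow_le_of_sobolev {C : ℝ≥0∞} (hp0 : 0 < p) (hp2 : p < 2)
    (hs0 : 0 < s) (hs2 : s < 2) (ha : AEMeasurable a μ) (hb : AEMeasurable b μ)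
    (hb0 : ∀ᵐ x ∂μ, b x ≠ 0) (hbtop : ∀ᵐ x ∂μ, b x ≠ ⊤)
    (henergy : ∫⁻ x, a x ^ (2 : ℝ) * b x ^ (-s) ∂μ ≠ ⊤)
    (hbint : ∫⁻ x, b x ^ (s * p / (2 - p)) ∂μ ≠ ⊤)
    (hsob : (∫⁻ x, b x ^ (s * p / (2 - p)) ∂μ) ^ ((2 - p) / (s * p)) ≤
      C * (∫⁻ x, a x ^ p ∂μ) ^ (1 / p)) :
    (∫⁻ x, a x ^ p ∂μ) ^ (1 - s / 2) ≤
      C ^ (s * p / 2) * (∫⁻ x, a x ^ (2 : ℝ) * b x ^ (-s) ∂μ) ^ (p / 2) := by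
  set A := ∫⁻ x, a x ^ p ∂μ
  set E := ∫⁻ x, a x ^ (2 : ℝ) * b x ^ (-s) ∂μ
  set B := ∫⁻ x, b x ^ (s * p / (2 - p)) ∂μ
  have hholder : A ≤ E ^ (p / 2) * B ^ ((2 - p) / 2) :=
    lintegral_rpow_le_weighted_energy_mul hp0 hp2 ha hb hb0 hbtop
  have hB : B ^ ((2 - p) / 2) ≤ C ^ (s * p / 2) * A ^ (s / 2) := calc
    B ^ ((2 - p) / 2) = (B ^ ((2 - p) / (s * p))) ^ (s * p / 2) := by
      rw [← ENNReal.rpow_mul]; congr 1; field_simp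
    _ ≤ (C * A ^ (1 / p)) ^ (s * p / 2) := by gcongr
    _ = C ^ (s * p / 2) * A ^ (s / 2) := by
      rw [ENNReal.mul_rpow_of_nonneg _ _ (by positivity), ← ENNReal.rpow_mul]; congr 2; field_simp
  have hA : A ≠ ⊤ := (hholder.trans_lt (ENNReal.mul_lt_top
    (ENNReal.rpow_lt_top_of_nonneg (by positivity) henergy)
    (ENNReal.rpow_lt_top_of_nonneg (by linarith) hbint))).ne
  refine ENNReal.rpow_one_sub_le_of_le_mul_rpow (by linarith) hA ?_
  calc A ≤ E ^ (p / 2) * (C ^ (s * p / 2) * A ^ (s / 2)) := hholder.trans (by gcongr)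
    _ = C ^ (s * p / 2) * E ^ (p / 2) * A ^ (s / 2) := by ring

end WeightedEnergy

theorem IsOpen.exists_monotone_iUnion_eq_isCompact_closure_subset {E : Type*}
    [SeminormedAddCommGroup E] [ProperSpace E] {Ω : Set E} (hΩ : IsOpen Ω) :
    ∃ S : ℕ → Set E, Monotone S ∧ ⋃ j, S j = Ω ∧
      ∀ j, IsOpen (S j) ∧ IsCompact (closure (S j)) ∧ closure (S j) ⊆ Ω := by
  have hΩc : ∀ {ε : ℝ≥0∞}, ε ≠ 0 → {x | ε ≤ Metric.infEDist x Ωᶜ} ⊆ Ω := fun {ε} hε x hx => by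
    by_contra hxΩ
    exact hε (le_zero_iff.1 ((show ε ≤ _ from hx).trans_eq
      (Metric.infEDist_zero_of_mem (mem_compl hxΩ))))
  -- `infEDist` rather than `infDist`: the latter is `0` for `Ω = univ`, the former `⊤`.
  refine ⟨fun j => Metric.ball 0 j ∩ {x | ((j : ℝ≥0∞) + 1)⁻¹ < Metric.infEDist x Ωᶜ},
    fun i j hij => inter_subset_inter (Metric.ball_subset_ball (by exact_mod_cast hij))
      fun x hx => lt_of_le_of_lt (ENNReal.inv_le_inv.2 (by gcongr)) hx, ?_, fun j => ⟨?_, ?_⟩⟩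
  · refine Subset.antisymm (iUnion_subset fun j x hx =>
    hΩc (ε := ((j : ℝ≥0∞) + 1)⁻¹) (by simp) hx.2.out.le) fun x hx => ?_
    have hpos : 0 < Metric.infEDist x Ωᶜ := by
      rw [Metric.infEDist_pos_iff_notMem_closure, hΩ.isClosed_compl.closure_eq]
      exact not_not_intro hx
    obtain ⟨j₁, hj₁⟩ := ENNReal.exists_inv_nat_lt hpos.ne'
    obtain ⟨j₂, hj₂⟩ := exists_nat_gt ‖x‖
    refine mem_iUnion.2 ⟨j₁ + j₂, ?_, lt_of_le_of_lt ?_ hj₁⟩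
    · rw [mem_ball_zero_iff]
      exact hj₂.trans_le (by exact_mod_cast Nat.le_add_left j₂ j₁)
    · gcongr
      exact le_add_right (by exact_mod_cast Nat.le_add_right j₁ j₂)
  · exact Metric.isOpen_ball.inter (isOpen_lt continuous_const Metric.continuous_infEDist)
  · have hcl : closure (Metric.ball (0 : E) j ∩ {x | ((j : ℝ≥0∞) + 1)⁻¹ < Metric.infEDist x Ωᶜ}) ⊆
        Metric.closedBall 0 j ∩ {x | ((j : ℝ≥0∞) + 1)⁻¹ ≤ Metric.infEDist x Ωᶜ} :=
      closure_minimal (fun x hx => ⟨Metric.ball_subset_closedBall hx.1, mem_ofPred.2 hx.2.out.le⟩)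
        (Metric.isClosed_closedBall.inter (isClosed_le continuous_const Metric.continuous_infEDist))
    exact ⟨(isCompact_closedBall 0 j).of_isClosed_subset isClosed_closure
      (hcl.trans inter_subset_left), hcl.trans (inter_subset_right.trans (hΩc (by simp)))⟩

theorem rpow_setLIntegral_iUnion_le {α ι : Type*} [MeasurableSpace α] [Countable ι]
    {μ : Measure α} {f : α → ℝ≥0∞} {s : ι → Set α} (hs : Directed (· ⊆ ·) s) {r : ℝ}
    (hr : 0 < r) {K : ℝ≥0∞} (h : ∀ i, (∫⁻ x in s i, f x ∂μ) ^ r ≤ K) :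
    (∫⁻ x in ⋃ i, s i, f x ∂μ) ^ r ≤ K := by
  rw [setLIntegral_iUnion_of_directed _ hs, ← ENNReal.le_rpow_inv_iff hr]
  exact iSup_le fun i => (ENNReal.le_rpow_inv_iff hr).2 (h i)

theorem rpow_setLIntegral_norm_gradient_le_of_sobolev_of_le {F : Type*} [NormedAddCommGroup F]
    [InnerProductSpace ℝ F] [CompleteSpace F] [MeasurableSpace F] [BorelSpace F]
    {μ : Measure F} {u : F → ℝ} {S : Set F} {p s c k : ℝ} (hp0 : 0 < p) (hp2 : p < 2)
    (hs0 : 0 < s) (hs2 : s < 2) (hS : MeasurableSet S) (hμS : μ S ≠ ⊤)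
    (hu : ContinuousOn u S) (hupos : ∀ x ∈ S, 0 < u x) (huk : ∀ x ∈ S, u x ≤ k)
    (henergy : ∫⁻ x in S, ENNReal.ofReal ‖gradient u x‖ ^ (2 : ℝ) *
      ENNReal.ofReal (u x) ^ (-s) ∂μ ≠ ⊤)
    (hsob : (∫⁻ x in S, ENNReal.ofReal (min (u x) k) ^ (s * p / (2 - p)) ∂μ) ^
        ((2 - p) / (s * p)) ≤
      ENNReal.ofReal c * (∫⁻ x in S, ENNReal.ofReal ‖gradient u x‖ ^ p ∂μ) ^ (1 / p)) :
    (∫⁻ x in S, ENNReal.ofReal ‖gradient u x‖ ^ p ∂μ) ^ (1 - s / 2) ≤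
      ENNReal.ofReal c ^ (s * p / 2) * (∫⁻ x in S, ENNReal.ofReal ‖gradient u x‖ ^ (2 : ℝ) *
        ENNReal.ofReal (u x) ^ (-s) ∂μ) ^ (p / 2) := by
  have hgrad : Measurable (gradient u) :=
    (InnerProductSpace.toDual ℝ F).symm.continuous.measurable.comp (measurable_fderiv ℝ u)
  rw [setLIntegral_congr_fun hS fun x hx => by rw [min_eq_left (huk x hx)]] at hsob
  have hq : 0 ≤ s * p / (2 - p) := div_nonneg (by positivity) (sub_pos.2 hp2).le
  have hbint : ∫⁻ x in S, ENNReal.ofReal (u x) ^ (s * p / (2 - p)) ∂μ ≠ ⊤ := by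
    refine (setLIntegral_lt_top_of_le_nnreal hμS
      ⟨(Real.toNNReal k) ^ (s * p / (2 - p)), fun x hx => ?_⟩).ne
    rw [ENNReal.coe_rpow_of_nonneg _ hq]
    exact ENNReal.rpow_le_rpow (ENNReal.ofReal_le_ofReal (huk x hx)) hq
  exact rpow_lintegral_rpow_le_of_sobolev hp0 hp2 hs0 hs2
    hgrad.norm.ennreal_ofReal.aemeasurable (hu.aemeasurable hS).ennreal_ofReal
    (ae_restrict_of_forall_mem hS fun x hx => (ENNReal.ofReal_pos.2 (hupos x hx)).ne')
    (ae_of_all _ fun _ => ENNReal.ofReal_ne_top) henergy hbint hsob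

theorem rpow_setLIntegral_norm_gradient_le_of_local_sobolev {F : Type*} [NormedAddCommGroup F]
    [InnerProductSpace ℝ F] [CompleteSpace F] [ProperSpace F] [MeasurableSpace F] [BorelSpace F]
    {μ : Measure F} [IsFiniteMeasureOnCompacts μ] {Ω : Set F} {u : F → ℝ} {p s c : ℝ}
    (hp0 : 0 < p) (hp2 : p < 2) (hs0 : 0 < s) (hs2 : s < 2) (hΩ : IsOpen Ω)
    (hu : ContinuousOn u Ω) (hupos : ∀ x ∈ Ω, 0 < u x)
    (hsob : ∀ k : ℕ, ∀ Ω' : Set F, IsOpen Ω' → Ω' ⊆ Ω → IsCompact (closure Ω') →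
      (∫⁻ x in Ω', ENNReal.ofReal (min (u x) k) ^ (s * p / (2 - p)) ∂μ) ^ ((2 - p) / (s * p)) ≤
        ENNReal.ofReal c * (∫⁻ x in Ω', ENNReal.ofReal ‖gradient u x‖ ^ p ∂μ) ^ (1 / p))
    (henergy : ∫⁻ x in Ω, ENNReal.ofReal ‖gradient u x‖ ^ (2 : ℝ) *
      ENNReal.ofReal (u x) ^ (-s) ∂μ ≠ ⊤) :
    (∫⁻ x in Ω, ENNReal.ofReal ‖gradient u x‖ ^ p ∂μ) ^ (1 - s / 2) ≤
      ENNReal.ofReal c ^ (s * p / 2) * (∫⁻ x in Ω, ENNReal.ofReal ‖gradient u x‖ ^ (2 : ℝ) *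
        ENNReal.ofReal (u x) ^ (-s) ∂μ) ^ (p / 2) := by
  obtain ⟨S, hSmono, rfl, hS⟩ := hΩ.exists_monotone_iUnion_eq_isCompact_closure_subset
  refine rpow_setLIntegral_iUnion_le hSmono.directed_le (by linarith) fun j => ?_
  obtain ⟨hSo, hSc, hSsub⟩ := hS j
  have hSΩ : S j ⊆ ⋃ i, S i := subset_closure.trans hSsub
  obtain ⟨M, hM⟩ := (hSc.image_of_continuousOn (hu.mono hSsub)).bddAbove
  obtain ⟨k, hk⟩ := exists_nat_gt M
  have hEj := lintegral_mono_set (μ := μ) (f := fun x =>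
    ENNReal.ofReal ‖gradient u x‖ ^ (2 : ℝ) * ENNReal.ofReal (u x) ^ (-s)) hSΩ
  refine (rpow_setLIntegral_norm_gradient_le_of_sobolev_of_le (k := k) hp0 hp2 hs0 hs2
    hSo.measurableSet ((measure_mono subset_closure).trans_lt hSc.measure_lt_top).ne
    (hu.mono hSΩ) (fun x hx => hupos x (hSΩ hx))
    (fun x hx => (hM (mem_image_of_mem u (subset_closure hx))).trans hk.le)
    (ne_top_of_le_ne_top henergy hEj) (hsob k (S j) hSo hSΩ hSc)).trans ?_
  gcongr

theorem gradient_Lp_from_generalized_energy_general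
    {n : ℕ} (hn : 3 ≤ n) (γ : ℝ) (hγ0 : 0 < γ) (hγ1 : γ < 1)
    (c : ℝ)
    (Ω : Set (EuclideanSpace ℝ (Fin n))) (hΩ : IsOpen Ω)
    (u : EuclideanSpace ℝ (Fin n) → ℝ)
    (hupos : ∀ x ∈ Ω, 0 < u x)
    (hdiff : ∀ x ∈ Ω, DifferentiableAt ℝ u x)
    (hSob : ∀ k : ℕ, ∀ Ω' : Set (EuclideanSpace ℝ (Fin n)),
      IsOpen Ω' → Ω' ⊆ Ω → IsCompact (closure Ω') →
      (∫⁻ x in Ω', ENNReal.ofReal (min (u x) k) ^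
          ((1 - γ) * (n * (1 + γ) / (n + γ - 1)) / (2 - n * (1 + γ) / (n + γ - 1)))) ^
        ((2 - n * (1 + γ) / (n + γ - 1)) / ((1 - γ) * (n * (1 + γ) / (n + γ - 1)))) ≤
      ENNReal.ofReal c *
        (∫⁻ x in Ω', ENNReal.ofReal ‖gradient u x‖ ^ (n * (1 + γ) / (n + γ - 1))) ^
          ((n + γ - 1) / (n * (1 + γ))))
    (hE : ∫⁻ x in Ω,
        ENNReal.ofReal ‖gradient u x‖ ^ (2 : ℝ) * ENNReal.ofReal (u x) ^ (γ - 1) < ⊤) :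
    (∫⁻ x in Ω, ENNReal.ofReal ‖gradient u x‖ ^ (n * (1 + γ) / (n + γ - 1)) < ⊤) ∧
    ∃ c' : ℝ≥0∞, c' ≠ ⊤ ∧
      ((∫⁻ x in Ω, ENNReal.ofReal ‖gradient u x‖ ^ (n * (1 + γ) / (n + γ - 1))) ^
          ((n + γ - 1) / (n * (1 + γ)))) ^ ((n * (1 + γ) / (n + γ - 1)) * (1 + γ) / 2) ≤
        c' * (∫⁻ x in Ω,
          ENNReal.ofReal ‖gradient u x‖ ^ (2 : ℝ) * ENNReal.ofReal (u x) ^ (γ - 1)) ^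
            ((n * (1 + γ) / (n + γ - 1)) / 2) := by
  have hn' : (3 : ℝ) ≤ n := by exact_mod_cast hn
  have hden : (0 : ℝ) < n + γ - 1 := by linarith
  have hinv : ((n : ℝ) + γ - 1) / (n * (1 + γ)) = 1 / (n * (1 + γ) / (n + γ - 1)) :=
    (one_div_div _ _).symm
  set p : ℝ := n * (1 + γ) / (n + γ - 1)
  have hp0 : 0 < p := by positivity
  have hp2 : p < 2 := by rw [div_lt_iff₀ hden]; nlinarith
  have h := rpow_setLIntegral_norm_gradient_le_of_local_sobolev hp0 hp2 (sub_pos.2 hγ1)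
    (by linarith) hΩ (fun x hx => (hdiff x hx).continuousAt.continuousWithinAt) hupos
    (by simpa only [hinv] using hSob) (by simpa only [neg_sub] using hE.ne)
  simp only [neg_sub] at h
  have hC : ENNReal.ofReal c ^ ((1 - γ) * p / 2) ≠ ⊤ :=
    ENNReal.rpow_ne_top_of_nonneg (by nlinarith) ENNReal.ofReal_ne_top
  have hK := ENNReal.mul_lt_top hC.lt_top (ENNReal.rpow_lt_top_of_nonneg (y := p / 2)
    (by positivity) hE.ne)
  refine ⟨(ENNReal.rpow_lt_top_iff_of_pos (by linarith)).1 (h.trans_lt hK), _, hC, ?_⟩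
  rw [hinv, ← ENNReal.rpow_mul]
  convert h using 2
  field_simp
  ring

theorem gradient_Lp_from_generalized_energy
    {n : ℕ} (hn : 3 ≤ n) (γ : ℝ) (hγ0 : 0 < γ) (hγ1 : γ < 1)
    (c : ℝ) (hc : 0 < c)
    (Ω : Set (EuclideanSpace ℝ (Fin n))) (hΩ : IsOpen Ω)
    (u : EuclideanSpace ℝ (Fin n) → ℝ)
    (hupos : ∀ x ∈ Ω, 0 < u x)
    (hdiff : ∀ x ∈ Ω, DifferentiableAt ℝ u x)
    (hSob : ∀ k : ℕ, ∀ Ω' : Set (EuclideanSpace ℝ (Fin n)),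
      IsOpen Ω' → Ω' ⊆ Ω → IsCompact (closure Ω') →
      (∫⁻ x in Ω', ENNReal.ofReal (min (u x) k) ^
          ((1 - γ) * (n * (1 + γ) / (n + γ - 1)) / (2 - n * (1 + γ) / (n + γ - 1)))) ^
        ((2 - n * (1 + γ) / (n + γ - 1)) / ((1 - γ) * (n * (1 + γ) / (n + γ - 1)))) ≤
      ENNReal.ofReal c *
        (∫⁻ x in Ω', ENNReal.ofReal ‖gradient u x‖ ^ (n * (1 + γ) / (n + γ - 1))) ^
          ((n + γ - 1) / (n * (1 + γ))))
    (hE : ∫⁻ x in Ω,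
        ENNReal.ofReal ‖gradient u x‖ ^ (2 : ℝ) * ENNReal.ofReal (u x) ^ (γ - 1) < ⊤) :
    (∫⁻ x in Ω, ENNReal.ofReal ‖gradient u x‖ ^ (n * (1 + γ) / (n + γ - 1)) < ⊤) ∧
    ∃ c' : ℝ≥0∞, c' ≠ ⊤ ∧
      ((∫⁻ x in Ω, ENNReal.ofReal ‖gradient u x‖ ^ (n * (1 + γ) / (n + γ - 1))) ^
          ((n + γ - 1) / (n * (1 + γ)))) ^ ((n * (1 + γ) / (n + γ - 1)) * (1 + γ) / 2) ≤
        c' * (∫⁻ x in Ω,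
          ENNReal.ofReal ‖gradient u x‖ ^ (2 : ℝ) * ENNReal.ofReal (u x) ^ (γ - 1)) ^
            ((n * (1 + γ) / (n + γ - 1)) / 2) :=
  gradient_Lp_from_generalized_energy_general hn γ hγ0 hγ1 c Ω hΩ u hupos hdiff hSob hE
end
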